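/- arXiv:0709.3680 — 3 statements merged into one kernel-verified Lean document; each statement's English description precedes it below -/
import Mathlib

section
/- Let x, y be probability vectors of dimension d with strictly positive entries, and define F(r) = (1/(r(r−1)))·(ln ∑ y_i^r − ln ∑ x_i^r) for r ≠ 0, 1, F(1) = ∑ y_i ln y_i − ∑ x_i ln x_i, and F(0) = −(1/d)(∑ ln y_i − ∑ ln x_i). Then F is continuous on all of ℝ. -/
open MeasureTheory Real Finset
open scoped BigOperators Nat

noncomputable section

/-- `x` is majorized by `y`: equal total sums, and each top-`k` partial sum of
`x` (expressed order-free: any sum of `x` over a `k`-element subset) is bounded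
by the top-`k` partial sum of `y` (the max over `k`-element subsets). -/
def IsMajorized {d : ℕ} (x y : Fin d → ℝ) : Prop :=
  (∑ i, x i = ∑ i, y i) ∧
    ∀ A : Finset (Fin d), ∃ B : Finset (Fin d),
      B.card = A.card ∧ ∑ i ∈ A, x i ≤ ∑ i ∈ B, y i

/-- A probability vector: nonnegative entries summing to `1`. -/
def IsProbVec {d : ℕ} (x : Fin d → ℝ) : Prop := (∀ i, 0 ≤ x i) ∧ ∑ i, x i = 1

/-- Tensor product of vectors: components `x i * z j`. -/
def tens {d l : ℕ} (x : Fin d → ℝ) (z : Fin l → ℝ) : Fin (d * l) → ℝ :=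
  fun k => x (finProdFinEquiv.symm k).1 * z (finProdFinEquiv.symm k).2

/-- Catalytic majorization: some finite-dimensional probability vector `z`
satisfies `x ⊗ z ≺ y ⊗ z`. -/
def CatMaj {d : ℕ} (x y : Fin d → ℝ) : Prop :=
  ∃ (l : ℕ) (z : Fin l → ℝ), IsProbVec z ∧ IsMajorized (tens x z) (tens y z)

/-! With `g r = log ∑ yᵢ ^ r - log ∑ xᵢ ^ r`, `g` vanishes at `0` (both sums are `d`) and at `1`
(both sums are `1`), so `F r = g r / (r (r - 1))` has removable singularities there, with limits
`-g'(0)` and `g'(1)`; these are exactly the prescribed values `F 0` and `F 1`. -/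

open Filter
open scoped Topology

lemma hasDerivAt_log_sum_rpow {ι : Type*} [Fintype ι] [Nonempty ι] {v : ι → ℝ}
    (hv : ∀ i, 0 < v i) (r : ℝ) :
    HasDerivAt (fun s => Real.log (∑ i, v i ^ s))
      ((∑ i, v i ^ r * Real.log (v i)) / ∑ i, v i ^ r) r := by
  have hsum : HasDerivAt (fun s => ∑ i, v i ^ s) (∑ i, v i ^ r * Real.log (v i)) r :=
    HasDerivAt.fun_sum fun i _ => (hasStrictDerivAt_const_rpow (hv i) r).hasDerivAt
  have hpos : 0 < ∑ i, v i ^ r := sum_pos (fun i _ => rpow_pos_of_pos (hv i) r) univ_nonempty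
  exact hsum.log hpos.ne'

lemma tendsto_div_mul_sub_of_hasDerivAt {g : ℝ → ℝ} {g' a b : ℝ} (hg : HasDerivAt g g' a)
    (hga : g a = 0) (hab : a ≠ b) :
    Tendsto (fun r => g r / ((r - a) * (r - b))) (𝓝[≠] a) (𝓝 (g' / (a - b))) := by
  have hslope : Tendsto (slope g a) (𝓝[≠] a) (𝓝 g') := hasDerivAt_iff_tendsto_slope.mp hg
  have hsub : Tendsto (fun r => r - b) (𝓝[≠] a) (𝓝 (a - b)) :=
    ((continuous_id.sub continuous_const).tendsto a).mono_left nhdsWithin_le_nhds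
  refine (hslope.div hsub (sub_ne_zero.mpr hab)).congr fun r => ?_
  rw [Pi.div_apply, slope_def_field, hga, sub_zero, div_div]

lemma continuous_of_eq_div_mul_sub_one {F g : ℝ → ℝ} (hg : Continuous g)
    (hg₀ : DifferentiableAt ℝ g 0) (hg₁ : DifferentiableAt ℝ g 1) (hg0 : g 0 = 0) (hg1 : g 1 = 0)
    (hF : ∀ r, r ≠ 0 → r ≠ 1 → F r = g r / (r * (r - 1)))
    (hF0 : F 0 = -deriv g 0) (hF1 : F 1 = deriv g 1) : Continuous F := by
  have hF_ev : ∀ a : ℝ, ∀ᶠ r in 𝓝[≠] a, r ≠ 0 ∧ r ≠ 1 := fun a => by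
    rcases eq_or_ne a 0 with rfl | ha0
    · filter_upwards [self_mem_nhdsWithin,
        nhdsWithin_le_nhds (eventually_ne_nhds zero_ne_one)] with r hr0 hr1 using ⟨hr0, hr1⟩
    rcases eq_or_ne a 1 with rfl | ha1
    · filter_upwards [self_mem_nhdsWithin,
        nhdsWithin_le_nhds (eventually_ne_nhds one_ne_zero)] with r hr1 hr0 using ⟨hr0, hr1⟩
    exact nhdsWithin_le_nhds ((eventually_ne_nhds ha0).and (eventually_ne_nhds ha1))
  refine continuous_iff_continuousAt.mpr fun a => ?_
  rw [← continuousWithinAt_compl_self, ContinuousWithinAt]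
  rcases eq_or_ne a 0 with rfl | ha0
  · have h := tendsto_div_mul_sub_of_hasDerivAt hg₀.hasDerivAt hg0 zero_ne_one
    rw [zero_sub, div_neg, div_one] at h
    rw [hF0]
    refine h.congr' ((hF_ev 0).mono fun r hr => ?_)
    rw [hF r hr.1 hr.2, sub_zero]
  rcases eq_or_ne a 1 with rfl | ha1
  · have h := tendsto_div_mul_sub_of_hasDerivAt hg₁.hasDerivAt hg1 one_ne_zero
    rw [sub_zero, div_one] at h
    rw [hF1]
    refine h.congr' ((hF_ev 1).mono fun r hr => ?_)
    rw [hF r hr.1 hr.2, sub_zero, mul_comm]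
  have hcont : ContinuousAt (fun r => g r / (r * (r - 1))) a :=
    hg.continuousAt.div (continuousAt_id.mul (continuousAt_id.sub continuousAt_const))
      (mul_ne_zero ha0 (sub_ne_zero.mpr ha1))
  rw [hF a ha0 ha1]
  exact hcont.tendsto.mono_left nhdsWithin_le_nhds |>.congr' <|
    (hF_ev a).mono fun r hr => (hF r hr.1 hr.2).symm

/-- the function `F` measuring the difference of the (suitably
normalized) `f_r` values of `y` and `x` is continuous on all of `ℝ`. -/
theorem stmt8 {d : ℕ} (hd : 0 < d) (x y : Fin d → ℝ)
    (hx : IsProbVec x) (hxp : ∀ i, 0 < x i)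
    (hy : IsProbVec y) (hyp : ∀ i, 0 < y i) :
    Continuous (fun r : ℝ =>
      if r = 0 then -(1 / (d : ℝ)) * (∑ i, Real.log (y i) - ∑ i, Real.log (x i))
      else if r = 1 then ∑ i, y i * Real.log (y i) - ∑ i, x i * Real.log (x i)
      else (1 / (r * (r - 1))) *
        (Real.log (∑ i, y i ^ r) - Real.log (∑ i, x i ^ r))) := by
  have : Nonempty (Fin d) := Fin.pos_iff_nonempty.mp hd
  set g : ℝ → ℝ := fun r => Real.log (∑ i, y i ^ r) - Real.log (∑ i, x i ^ r)
  have hg : ∀ r, HasDerivAt g ((∑ i, y i ^ r * Real.log (y i)) / (∑ i, y i ^ r)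
      - (∑ i, x i ^ r * Real.log (x i)) / (∑ i, x i ^ r)) r := fun r =>
    (hasDerivAt_log_sum_rpow hyp r).sub (hasDerivAt_log_sum_rpow hxp r)
  have hgd : Differentiable ℝ g := fun r => (hg r).differentiableAt
  refine continuous_of_eq_div_mul_sub_one hgd.continuous (hgd 0) (hgd 1)
    (by simp [g]) (by simp [g, hx.2, hy.2]) (fun r h0 h1 => ?_) ?_ ?_
  · simp only [h0, h1, if_false, g]
    ring
  · simp only [if_true, (hg 0).deriv, rpow_zero, one_mul, sum_const, card_univ,
      Fintype.card_fin, nsmul_eq_mul, mul_one]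
    ring
  · simp [(hg 1).deriv, hx.2, hy.2]
end
end

section
/- For 0 < t ≤ c and a positive integer n, the integral ∫₀^∞ max(c·e^{−s^{1/n}} − t, 0) ds equals c·n! − t·n!·∑_{j=0}^{n} (1/j!)·(ln(c/t))^j, which also equals t·n!·∑_{j=n+1}^{∞} (1/j!)·(ln(c/t))^j. -/
open MeasureTheory Real Finset
open scoped BigOperators Nat

noncomputable section

/-!
Substituting `s = x ^ n` turns the integral into `∫₀^∞ n x^(n-1) (c e^(-x) - t)⁺ dx`, whose
integrand is supported on `[0, L]` with `L = log (c / t)`. There `x ^ k e^(-x)` has the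
antiderivative `-k! e^(-x) ∑_{j ≤ k} x^j / j!`, which gives the first closed form. Since
`t e^L = c`, the second one is `t n!` times the tail of the exponential series at `L`.
-/

lemma hasDerivAt_sum_range_pow_div_factorial (k : ℕ) (x : ℝ) :
    HasDerivAt (fun x : ℝ => ∑ j ∈ range (k + 1), x ^ j / j !)
      (∑ j ∈ range k, x ^ j / j !) x := by
  induction k with
  | zero => simpa using hasDerivAt_const x (1 : ℝ)
  | succ k ih =>
    have hpow : HasDerivAt (fun x : ℝ => x ^ (k + 1) / (k + 1)!) (x ^ k / k !) x := by
      refine ((hasDerivAt_pow (k + 1) x).div_const _).congr_deriv ?_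
      rw [Nat.add_sub_cancel, Nat.factorial_succ]
      push_cast
      field_simp
    simpa only [← sum_range_succ] using ih.fun_add hpow

lemma integral_pow_mul_exp_neg (k : ℕ) (x : ℝ) :
    ∫ u in (0 : ℝ)..x, u ^ k * exp (-u) =
      k ! * (1 - exp (-x) * ∑ j ∈ range (k + 1), x ^ j / j !) := by
  have hF : ∀ u : ℝ,
      HasDerivAt (fun u => -(k ! : ℝ) * exp (-u) * ∑ j ∈ range (k + 1), u ^ j / j !)
        (u ^ k * exp (-u)) u := by
    intro u
    have := (((hasDerivAt_neg u).exp).const_mul (-(k ! : ℝ))).fun_mul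
      (hasDerivAt_sum_range_pow_div_factorial k u)
    refine this.congr_deriv ?_
    rw [sum_range_succ]
    field_simp
    ring
  have hsum_zero : ∑ j ∈ range (k + 1), (0 : ℝ) ^ j / j ! = 1 := by simp [sum_range_succ']
  rw [intervalIntegral.integral_eq_sub_of_hasDerivAt (fun u _ => hF u)
    (by apply Continuous.intervalIntegrable; fun_prop), hsum_zero, neg_zero, exp_zero]
  ring

lemma integral_Ioi_comp_rpow_inv (f : ℝ → ℝ) {p : ℝ} (hp : 0 < p) :
    ∫ s in Set.Ioi (0 : ℝ), f (s ^ p⁻¹) = ∫ x in Set.Ioi (0 : ℝ), p * x ^ (p - 1) * f x := by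
  rw [← integral_comp_rpow_Ioi_of_pos hp]
  refine setIntegral_congr_fun measurableSet_Ioi fun x hx => ?_
  rw [smul_eq_mul, rpow_rpow_inv (le_of_lt hx) hp.ne']

lemma setIntegral_Ioi_mul_max_exp_neg_sub (f : ℝ → ℝ) {c t : ℝ} (ht : 0 < t) (htc : t ≤ c) :
    ∫ x in Set.Ioi (0 : ℝ), f x * max (c * exp (-x) - t) 0 =
      ∫ x in (0 : ℝ)..log (c / t), f x * (c * exp (-x) - t) := by
  have hc : 0 < c := ht.trans_le htc
  have hsign : ∀ x, 0 ≤ c * exp (-x) - t ↔ x ≤ log (c / t) := by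
    intro x
    rw [le_log_iff_exp_le (by positivity), le_div_iff₀ ht, exp_neg, sub_nonneg,
      le_mul_inv_iff₀ (exp_pos x), mul_comm]
  have hL : 0 ≤ log (c / t) := log_nonneg ((one_le_div ht).mpr htc)
  rw [intervalIntegral.integral_of_le hL, ← Set.Ioi_inter_Iic,
    ← setIntegral_indicator measurableSet_Iic]
  refine setIntegral_congr_fun measurableSet_Ioi fun x _ => ?_
  by_cases hx : x ≤ log (c / t)
  · rw [Set.indicator_of_mem (Set.mem_Iic.mpr hx), max_eq_left ((hsign x).mpr hx)]
  · rw [Set.indicator_of_notMem (mt Set.mem_Iic.mp hx),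
      max_eq_right (not_le.mp (mt (hsign x).mp hx)).le, mul_zero]

lemma integral_succ_mul_pow_mul_exp_neg_sub (k : ℕ) {c t L : ℝ} (hL : c * exp (-L) = t) :
    ∫ x in (0 : ℝ)..L, (k + 1) * x ^ k * (c * exp (-x) - t) =
      c * (k + 1)! - t * (k + 1)! * ∑ j ∈ range (k + 2), L ^ j / j ! := by
  subst hL
  have hsplit : (fun x => (k + 1) * x ^ k * (c * exp (-x) - c * exp (-L))) =
      fun x => c * (k + 1) * (x ^ k * exp (-x)) - c * exp (-L) * (k + 1) * x ^ k := by
    ext x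
    ring
  rw [hsplit, intervalIntegral.integral_sub (by apply Continuous.intervalIntegrable; fun_prop)
      (by apply Continuous.intervalIntegrable; fun_prop),
    intervalIntegral.integral_const_mul, intervalIntegral.integral_const_mul,
    integral_pow_mul_exp_neg, integral_pow, sum_range_succ _ (k + 1), Nat.factorial_succ]
  push_cast
  field_simp
  ring

lemma tsum_pow_div_factorial_add (x : ℝ) (m : ℕ) :
    ∑' j : ℕ, x ^ (m + j) / (m + j)! = exp x - ∑ j ∈ range m, x ^ j / j ! := by
  have h := (hasSum_nat_add_iff' m).mpr (NormedSpace.expSeries_div_hasSum_exp x)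
  rw [← exp_eq_exp_ℝ] at h
  simpa only [add_comm _ m] using h.tsum_eq

lemma integral_Ioi_max_mul_exp_neg_rpow_inv_sub {c t : ℝ} {n : ℕ} (hn : 1 ≤ n) (ht : 0 < t)
    (htc : t ≤ c) :
    ∫ s in Set.Ioi (0 : ℝ), max (c * exp (-(s ^ ((n : ℝ)⁻¹))) - t) 0 =
      c * (n ! : ℝ) - t * n ! * ∑ j ∈ range (n + 1), log (c / t) ^ j / j ! := by
  obtain ⟨k, rfl⟩ := Nat.exists_eq_add_of_le' hn
  have hc : 0 < c := ht.trans_le htc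
  have hcL : c * exp (-log (c / t)) = t := by
    rw [exp_neg, exp_log (div_pos hc ht)]
    field_simp
  have hexponent : ((k + 1 : ℕ) : ℝ) - 1 = (k : ℕ) := by push_cast; ring
  calc ∫ s in Set.Ioi (0 : ℝ), max (c * exp (-(s ^ ((k + 1 : ℕ) : ℝ)⁻¹)) - t) 0
      = ∫ x in Set.Ioi (0 : ℝ),
          ((k + 1 : ℕ) : ℝ) * x ^ (((k + 1 : ℕ) : ℝ) - 1) * max (c * exp (-x) - t) 0 :=
        integral_Ioi_comp_rpow_inv (fun x => max (c * exp (-x) - t) 0) (by positivity)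
    _ = ∫ x in (0 : ℝ)..log (c / t), ((k + 1 : ℕ) : ℝ) * x ^ (((k + 1 : ℕ) : ℝ) - 1) *
          (c * exp (-x) - t) :=
        setIntegral_Ioi_mul_max_exp_neg_sub _ ht htc
    _ = _ := by
      simp_rw [hexponent, rpow_natCast]
      push_cast
      exact integral_succ_mul_pow_mul_exp_neg_sub k hcL

/-- closed forms for `α(c,t,n) = ∫₀^∞ (c e^{-s^{1/n}} - t)⁺ ds`
when `0 < t ≤ c`. -/
theorem stmt9 (c t : ℝ) (n : ℕ) (hn : 1 ≤ n) (ht : 0 < t) (htc : t ≤ c) :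
    (∫ s in Set.Ioi (0 : ℝ), max (c * Real.exp (-(s ^ ((n : ℝ)⁻¹))) - t) 0) =
        c * (n ! : ℝ) - t * (n ! : ℝ) *
          ∑ j ∈ Finset.range (n + 1), (1 / (j ! : ℝ)) * Real.log (c / t) ^ j ∧
      (∫ s in Set.Ioi (0 : ℝ), max (c * Real.exp (-(s ^ ((n : ℝ)⁻¹))) - t) 0) =
        t * (n ! : ℝ) *
          ∑' j : ℕ, (1 / ((n + 1 + j)! : ℝ)) * Real.log (c / t) ^ (n + 1 + j) := by
  have htexp : t * exp (log (c / t)) = c := by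
    rw [exp_log (div_pos (ht.trans_le htc) ht)]
    field_simp
  simp only [one_div_mul_eq_div, integral_Ioi_max_mul_exp_neg_rpow_inv_sub hn ht htc,
    tsum_pow_div_factorial_add, true_and]
  linear_combination (-(n ! : ℝ)) * htexp
end
end

section
/- For fixed r > 1 and fixed integer k ≥ 0, the limit as n → ∞ of ∑_{j=max(0,k−n−1)}^{∞} ((n+1)!·n^{j−k}/(n+1+j−k)!)·r^{−j} equals r/(r−1). -/
open MeasureTheory Real Finset
open scoped BigOperators Nat

noncomputable section

open Filter Topology

/-! For `n ≥ k` the guard `k - (n + 1) ≤ j` is vacuous, and the `j`-th coefficient is a finite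
product of ratios `n / (n + 2 + i)` (if `j ≥ k`) or `(n + 1 - i) / n` (if `j < k`). Hence it
tends to `1` and, once `n ≥ 1`, is bounded by `2`. Dominated convergence against `2 r⁻ʲ` turns
the limit into the geometric series `∑ r⁻ʲ = r / (r - 1)`. -/

lemma tendsto_prod_add_div_add_atTop {ι : Type*} (s : Finset ι) (a b : ι → ℝ) :
    Tendsto (fun n : ℕ => ∏ i ∈ s, ((n : ℝ) + a i) / (n + b i)) atTop (𝓝 1) := by
  rw [← prod_const_one (s := s)]
  refine tendsto_finsetProd s fun i _ => ?_
  simpa [add_comm] using tendsto_add_mul_div_add_mul_atTop_nhds (a i) (b i) (1 : ℝ) one_ne_zero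

lemma hasSum_zpow_neg_natCast {r : ℝ} (hr : 1 < r) :
    HasSum (fun j : ℕ => r ^ (-(j : ℤ))) (r / (r - 1)) := by
  have hgeom := hasSum_geometric_of_lt_one (inv_nonneg.2 (by linarith)) (inv_lt_one_of_one_lt₀ hr)
  convert hgeom using 1
  · ext j; rw [zpow_neg, zpow_natCast, inv_pow]
  · have : r ≠ 0 := by linarith
    have : r - 1 ≠ 0 := by linarith
    field_simp

def seriesCoeff (k n j : ℕ) : ℝ :=
  ((n + 1)! : ℝ) * (n : ℝ) ^ ((j : ℤ) - (k : ℤ)) / ((n + 1 + j - k)! : ℝ)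

lemma seriesCoeff_self_add (k n e : ℕ) :
    seriesCoeff k n (k + e) = ∏ i ∈ range e, (n : ℝ) / (n + 2 + i) := by
  have hfact : ((n + 1 + e)! : ℝ) = (n + 1)! * ∏ i ∈ range e, ((n : ℝ) + 2 + i) := by
    rw [← Nat.factorial_mul_ascFactorial, Nat.ascFactorial_eq_prod_range]
    push_cast
    ring_nf
  rw [seriesCoeff, prod_div_distrib, prod_const, card_range,
    show n + 1 + (k + e) - k = n + 1 + e by omega, hfact]
  push_cast
  rw [add_sub_cancel_left, zpow_natCast, mul_div_mul_left _ _ (by positivity)]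

lemma seriesCoeff_of_eq_add {k n j d : ℕ} (hk : k = j + d) (hd : d ≤ n + 1) :
    seriesCoeff k n j = ∏ i ∈ range d, ((n : ℝ) + 1 - i) / n := by
  have hfact : ((n + 1)! : ℝ) = (n + 1 - d)! * ∏ i ∈ range d, ((n : ℝ) + 1 - i) := by
    rw [← Nat.factorial_mul_descFactorial hd, Nat.descFactorial_eq_prod_range]
    push_cast
    congr 1
    refine prod_congr rfl fun i hi => ?_
    rw [Nat.cast_sub (by have := mem_range.1 hi; omega)]
    push_cast; ring
  rw [seriesCoeff, prod_div_distrib, prod_const, card_range, hfact,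
    show n + 1 + j - k = n + 1 - d by omega, hk]
  push_cast
  rw [show (j : ℤ) - (j + d) = -(d : ℤ) by ring, zpow_neg, zpow_natCast]
  field_simp

lemma tendsto_seriesCoeff (k j : ℕ) : Tendsto (fun n => seriesCoeff k n j) atTop (𝓝 1) := by
  rcases le_or_gt k j with hkj | hjk
  · obtain ⟨e, rfl⟩ := Nat.exists_eq_add_of_le hkj
    refine (tendsto_prod_add_div_add_atTop (range e) (fun _ => 0) (fun i => 2 + i)).congr fun n => ?_
    rw [seriesCoeff_self_add]
    exact prod_congr rfl fun i _ => by ring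
  · obtain ⟨d, rfl⟩ := Nat.exists_eq_add_of_lt hjk
    refine (tendsto_prod_add_div_add_atTop (range (d + 1)) (fun i => 1 - i) (fun _ => 0)).congr' ?_
    filter_upwards [eventually_ge_atTop (d + 1)] with n hn
    rw [seriesCoeff_of_eq_add (d := d + 1) (by ring) (by omega)]
    exact prod_congr rfl fun i _ => by ring

lemma seriesCoeff_nonneg (k n j : ℕ) : 0 ≤ seriesCoeff k n j := by
  unfold seriesCoeff; positivity

lemma seriesCoeff_le_two {k n : ℕ} (hk : k ≤ n) (hn : 1 ≤ n) (j : ℕ) : seriesCoeff k n j ≤ 2 := by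
  have hn' : (1 : ℝ) ≤ n := by exact_mod_cast hn
  rcases le_or_gt k j with hkj | hjk
  · obtain ⟨e, rfl⟩ := Nat.exists_eq_add_of_le hkj
    rw [seriesCoeff_self_add]
    calc _ ≤ (1 : ℝ) := prod_le_one (fun i _ => by positivity)
            fun i _ => div_le_one_of_le₀ (by linarith [(i.cast_nonneg : (0 : ℝ) ≤ i)]) (by positivity)
      _ ≤ 2 := by norm_num
  · obtain ⟨d, rfl⟩ := Nat.exists_eq_add_of_lt hjk
    rw [seriesCoeff_of_eq_add (d := d + 1) (by ring) (by omega), prod_range_succ']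
    have htail : ∏ i ∈ range d, ((n : ℝ) + 1 - (i + 1 : ℕ)) / n ≤ 1 := by
      refine prod_le_one (fun i hi => ?_) fun i _ => ?_
      · have : (i : ℝ) + 1 ≤ n := by have := mem_range.1 hi; exact_mod_cast (by omega : i + 1 ≤ n)
        push_cast; exact div_nonneg (by linarith) (by positivity)
      · rw [div_le_one (by positivity)]; push_cast; linarith [(i.cast_nonneg : (0 : ℝ) ≤ i)]
    have hhead : ((n : ℝ) + 1 - (0 : ℕ)) / n ≤ 2 := by
      rw [Nat.cast_zero, sub_zero, div_le_iff₀ (by positivity)]; linarith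
    calc _ ≤ 1 * 2 := mul_le_mul htail hhead (by rw [Nat.cast_zero, sub_zero]; positivity) zero_le_one
      _ = 2 := one_mul 2

/-- the series `∑_{j ≥ max(0, k-n-1)} ((n+1)! n^{j-k}/(n+1+j-k)!) r^{-j}`
converges to `r/(r-1)` as `n → ∞`, for fixed `r > 1` and `k`. -/
theorem stmt18 (r : ℝ) (hr : 1 < r) (k : ℕ) :
    Filter.Tendsto
      (fun n : ℕ => ∑' j : ℕ,
        if k - (n + 1) ≤ j then
          ((n + 1)! : ℝ) * (n : ℝ) ^ ((j : ℤ) - (k : ℤ)) /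
            ((n + 1 + j - k)! : ℝ) * r ^ (-(j : ℤ))
        else 0)
      Filter.atTop (nhds (r / (r - 1))) := by
  have hgeom := hasSum_zpow_neg_natCast hr
  have hlim (j : ℕ) :
      Tendsto (fun n => seriesCoeff k n j * r ^ (-(j : ℤ))) atTop (𝓝 (r ^ (-(j : ℤ)))) := by
    simpa using (tendsto_seriesCoeff k j).mul_const (r ^ (-(j : ℤ)))
  have hbound : ∀ᶠ n in atTop, ∀ j : ℕ,
      ‖seriesCoeff k n j * r ^ (-(j : ℤ))‖ ≤ 2 * r ^ (-(j : ℤ)) := by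
    filter_upwards [eventually_ge_atTop k, eventually_ge_atTop 1] with n hk hn j
    rw [norm_of_nonneg (mul_nonneg (seriesCoeff_nonneg k n j) (by positivity))]
    exact mul_le_mul_of_nonneg_right (seriesCoeff_le_two hk hn j) (by positivity)
  rw [← hgeom.tsum_eq]
  refine (tendsto_tsum_of_dominated_convergence (hgeom.summable.mul_left 2) hlim hbound).congr' ?_
  filter_upwards [eventually_ge_atTop k] with n hk
  refine tsum_congr fun j => ?_
  rw [if_pos (by omega), seriesCoeff]
end
end
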